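/- For every x in the open interval (0, 1/2), there exists an integer n ≥ 1 such that φ^n(x) ≥ 1/2; that is, every trajectory starting in (0, 1/2) eventually escapes the interval (0, 1/2). -/

import Mathlib

/-- The paradoxical map: `φ(x) = x/(1-x)` for `x ∈ (0, 1/2)`, `φ(x) = 2(1-x)` for
`x ∈ [1/2, 1]`, and `φ(x) = 0` otherwise (in particular `φ(0) = 0`). -/
noncomputable def psi (x : ℝ) : ℝ :=
  if 0 < x ∧ x < 1 / 2 then x / (1 - x)
  else if 1 / 2 ≤ x ∧ x ≤ 1 then 2 * (1 - x)
  else 0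

/-! On `(0, 1/2)` the map is `y ↦ y / (1 - y)`, i.e. `1/y ↦ 1/y - 1`. An orbit that stayed in
`(0, 1/2)` forever would therefore have `1/φⁿ(x) = 1/x - n`, which becomes negative. -/

open Set

lemma psi_of_mem_Ioo {y : ℝ} (hy : y ∈ Ioo 0 (1 / 2)) : psi y = y / (1 - y) :=
  if_pos hy

lemma psi_pos_of_mem_Ioo {y : ℝ} (hy : y ∈ Ioo 0 (1 / 2)) : 0 < psi y := by
  rw [psi_of_mem_Ioo hy]
  exact div_pos hy.1 (by linarith [hy.2])

lemma inv_psi_of_mem_Ioo {y : ℝ} (hy : y ∈ Ioo 0 (1 / 2)) : (psi y)⁻¹ = y⁻¹ - 1 := by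
  rw [psi_of_mem_Ioo hy, inv_div, sub_div, div_self hy.1.ne', one_div]

lemma inv_iterate_psi {x : ℝ} {n : ℕ} (h : ∀ k < n, psi^[k] x ∈ Ioo 0 (1 / 2)) :
    (psi^[n] x)⁻¹ = x⁻¹ - n := by
  induction n with
  | zero => simp
  | succ n ih =>
    rw [Function.iterate_succ_apply', inv_psi_of_mem_Ioo (h n n.lt_succ_self),
      ih fun k hk => h k (hk.trans n.lt_succ_self)]
    push_cast
    ring

/-- For every `x ∈ (0, 1/2)` there exists `n ≥ 1` with `φ^n(x) ≥ 1/2`: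
every trajectory starting in `(0, 1/2)` eventually escapes `(0, 1/2)`. -/
theorem stmt_10 (x : ℝ) (hx : x ∈ Set.Ioo (0 : ℝ) (1 / 2)) :
    ∃ n : ℕ, 1 ≤ n ∧ 1 / 2 ≤ psi^[n] x := by
  by_contra! hstay
  have hmem : ∀ n, psi^[n] x ∈ Ioo 0 (1 / 2) := by
    intro n
    induction n with
    | zero => exact hx
    | succ n ih =>
      refine ⟨?_, hstay (n + 1) n.succ_pos⟩
      rw [Function.iterate_succ_apply']
      exact psi_pos_of_mem_Ioo ih
  obtain ⟨n, hn⟩ := exists_nat_gt x⁻¹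
  have hinv := inv_iterate_psi (n := n) fun k _ => hmem k
  have hpos : 0 < (psi^[n] x)⁻¹ := inv_pos.mpr (hmem n).1
  linarith
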